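/- arXiv:math/0103214 — 4 statements merged into one kernel-verified Lean document; each statement's English description precedes it below -/
import Mathlib

section
/- Let Δ ⊆ ℝ^d be a reflexive polytope and Δ = Δ_1 + … + Δ_r a Minkowski sum decomposition into nonempty compact convex sets. Let v ∈ Δ with decomposition v = v_1 + … + v_r, v_i ∈ Δ_i, and let F = {w ∈ Δ* : ⟨v, w⟩ = -1}. Then for every z of the form z = λw with λ ≥ 0 and w ∈ F, and for every i, one has ⟨v_i, z⟩ = min_{x ∈ Δ_i} ⟨x, z⟩. -/
open Pointwise

/-- The standard inner product on `ℝ^d`. -/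
def dotp {d : ℕ} (x y : Fin d → ℝ) : ℝ := ∑ i, x i * y i

/-- A point of `ℝ^d` with integer coordinates (a lattice point of `ℤ^d`). -/
def IsLatticePt {d : ℕ} (x : Fin d → ℝ) : Prop := ∀ i, ∃ n : ℤ, x i = (n : ℝ)

/-- A lattice polytope: the convex hull of a finite set of lattice points. -/
def IsLatticePolytope {d : ℕ} (P : Set (Fin d → ℝ)) : Prop :=
  ∃ S : Finset (Fin d → ℝ), (∀ x ∈ S, IsLatticePt x) ∧ P = convexHull ℝ (S : Set (Fin d → ℝ))

/-- The dual set `A* = {x : ⟨y,x⟩ ≥ -1 ∀ y ∈ A}`. -/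
def dualSet {d : ℕ} (A : Set (Fin d → ℝ)) : Set (Fin d → ℝ) :=
  {x | ∀ y ∈ A, -1 ≤ dotp y x}

/-- A reflexive polytope: a lattice polytope with `0` in its interior whose dual is
also a lattice polytope. -/
def IsReflexivePolytope {d : ℕ} (P : Set (Fin d → ℝ)) : Prop :=
  IsLatticePolytope P ∧ (0 : Fin d → ℝ) ∈ interior P ∧ IsLatticePolytope (dualSet P)

/-- The minimum (infimum) of `⟨x, z⟩` over `x ∈ A`. -/
noncomputable def minDot {d : ℕ} (A : Set (Fin d → ℝ)) (z : Fin d → ℝ) : ℝ :=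
  sInf ((fun x => dotp x z) '' A)

lemma dotp_add_left {d : ℕ} (a b w : Fin d → ℝ) :
    dotp (a + b) w = dotp a w + dotp b w := by
  simp [dotp, add_mul, Finset.sum_add_distrib]

lemma dotp_sub_left {d : ℕ} (a b w : Fin d → ℝ) :
    dotp (a - b) w = dotp a w - dotp b w := by
  simp [dotp, sub_mul, Finset.sum_sub_distrib]

lemma dotp_smul_right {d : ℕ} (x w : Fin d → ℝ) (c : ℝ) :
    dotp x (c • w) = c * dotp x w := by
  simp [dotp, Finset.mul_sum, mul_left_comm]

/-- linearity of the support functions of the parts of a Minkowski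
decomposition on the cone over the facet of `Δ*` dual to `v`. -/
theorem support_linear_on_cone {d r : ℕ} (Δ : Set (Fin d → ℝ))
    (hΔ : IsReflexivePolytope Δ) (D : Fin r → Set (Fin d → ℝ))
    (hne : ∀ i, (D i).Nonempty) (hcomp : ∀ i, IsCompact (D i))
    (hconv : ∀ i, Convex ℝ (D i)) (hsum : Δ = ∑ i, D i)
    (v : Fin d → ℝ) (hv : v ∈ Δ)
    (vp : Fin r → Fin d → ℝ) (hvp : ∀ i, vp i ∈ D i) (hvsum : v = ∑ i, vp i) :
    ∀ lam : ℝ, 0 ≤ lam → ∀ w ∈ dualSet Δ, dotp v w = -1 →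
      ∀ i, dotp (vp i) (lam • w) = minDot (D i) (lam • w) := by
  intro lam hlam w hw hvw i
  -- key: dotp (vp i) w ≤ dotp x w for all x ∈ D i
  have key : ∀ x ∈ D i, dotp (vp i) w ≤ dotp x w := by
    intro x hx
    have hy : x + (v - vp i) ∈ Δ := by
      rw [hsum, Set.mem_fintype_sum]
      classical
      refine ⟨fun j => if j = i then x else vp j, fun j => ?_, ?_⟩
      · by_cases h : j = i <;> simp [h, hx, hvp j]
      · have h1 : ∑ j, (if j = i then x else vp j)
            = x + ∑ j ∈ {i}ᶜ, vp j := by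
          rw [Fintype.sum_eq_add_sum_compl i]
          simp only [if_pos rfl]
          congr 1
          exact Finset.sum_congr rfl (fun j hj => by
            simp only [Finset.mem_compl, Finset.mem_singleton] at hj
            simp [hj])
        have h2 : v = vp i + ∑ j ∈ {i}ᶜ, vp j := by
          rw [hvsum, Fintype.sum_eq_add_sum_compl i]
        rw [h1, h2]; abel
    have := hw _ hy
    have hdy : dotp (x + (v - vp i)) w = dotp x w + (dotp v w - dotp (vp i) w) := by
      rw [dotp_add_left, dotp_sub_left]
    rw [hdy, hvw] at this
    linarith
  have hmem : dotp (vp i) (lam • w) ∈ (fun x => dotp x (lam • w)) '' (D i) :=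
    ⟨vp i, hvp i, rfl⟩
  have hlb : ∀ y ∈ (fun x => dotp x (lam • w)) '' (D i), dotp (vp i) (lam • w) ≤ y := by
    rintro y ⟨x, hx, rfl⟩
    simp only [dotp_smul_right]
    exact mul_le_mul_of_nonneg_left (key x hx) hlam
  refine (le_antisymm (le_csInf ⟨_, hmem⟩ hlb) (csInf_le ⟨_, hlb⟩ hmem))
end

section
/- Let d ≥ 1, let Δ ⊆ ℝ^d be a reflexive polytope, and let Δ = Δ_1 + … + Δ_r be a Minkowski sum decomposition where each Δ_i is a lattice polytope containing 0. Then for every extreme point e of Δ*, there is exactly one index i such that min_{x ∈ Δ_i} ⟨x, e⟩ = -1, and for every other index j the minimum of ⟨x, e⟩ over x ∈ Δ_j equals 0. -/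
/-! The minimum of the integral functional `⟨·, e⟩` on each lattice polytope `Δᵢ ∋ 0` is an
integer `mᵢ ≤ 0`, and these minima add up to the minimum over `Δ = ∑ Δᵢ`. As `e ∈ Δ*` this sum is
at least `-1`. It is negative: otherwise `0` and `2e` both lie in `Δ*` and have midpoint `e`, so
extremality forces `e = 0`, whereas `0` is an interior point of `Δ*` because `Δ` is bounded. Integers
`mᵢ ≤ 0` summing to `-1` are all zero but one, which is `-1`. -/

open Pointwise

open Matrix

section Dual

variable {d : ℕ}

theorem dotp_eq_dotProduct (x y : Fin d → ℝ) : dotp x y = x ⬝ᵥ y := rfl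

theorem IsLatticePt.exists_int_dotp_eq {x y : Fin d → ℝ} (hx : IsLatticePt x)
    (hy : IsLatticePt y) : ∃ n : ℤ, dotp x y = n := by
  choose a ha using hx
  choose b hb using hy
  exact ⟨∑ i, a i * b i, by simp [dotp, ha, hb]⟩

theorem convex_setOf_le_dotp (c : ℝ) (z : Fin d → ℝ) : Convex ℝ {x | c ≤ dotp x z} :=
  convex_halfSpace_ge ((dotProductBilin ℝ ℝ).flip z).isLinear c

theorem image_dotp_fintypeSum {ι : Type*} [Fintype ι] (D : ι → Set (Fin d → ℝ))
    (z : Fin d → ℝ) : (dotp · z) '' ∑ i, D i = ∑ i, (dotp · z) '' D i :=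
  Set.image_finsetSum ((dotProductBilin ℝ ℝ).flip z) _ _

theorem dualSet_convexHull (A : Set (Fin d → ℝ)) : dualSet (convexHull ℝ A) = dualSet A := by
  refine Set.Subset.antisymm (fun x hx y hy => hx y (subset_convexHull ℝ A hy)) fun x hx y hy => ?_
  exact convexHull_min (fun y hy => hx y hy) (convex_setOf_le_dotp (-1) x) hy

theorem zero_mem_interior_dualSet_of_finite {A : Set (Fin d → ℝ)} (hA : A.Finite) :
    (0 : Fin d → ℝ) ∈ interior (dualSet A) := by
  refine mem_interior.2 ⟨⋂ y ∈ A, {x | -1 < dotp y x}, ?_, ?_, ?_⟩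
  · exact fun x hx y hy => (Set.mem_iInter₂.1 hx y hy).le
  · exact hA.isOpen_biInter fun y _ => isOpen_lt continuous_const (by unfold dotp; fun_prop)
  · simp [dotp]

theorem IsLatticePolytope.zero_mem_interior_dualSet {P : Set (Fin d → ℝ)}
    (hP : IsLatticePolytope P) : (0 : Fin d → ℝ) ∈ interior (dualSet P) := by
  obtain ⟨S, -, rfl⟩ := hP
  rw [dualSet_convexHull]
  exact zero_mem_interior_dualSet_of_finite S.finite_toSet

theorem IsLatticePolytope.isLatticePt_of_mem_extremePoints {P : Set (Fin d → ℝ)}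
    (hP : IsLatticePolytope P) {x : Fin d → ℝ} (hx : x ∈ P.extremePoints ℝ) : IsLatticePt x := by
  obtain ⟨S, hS, rfl⟩ := hP
  exact hS x (extremePoints_convexHull_subset hx)

theorem IsLatticePolytope.exists_isLeast_image_dotp {P : Set (Fin d → ℝ)}
    (hP : IsLatticePolytope P) (hne : P.Nonempty) {z : Fin d → ℝ} (hz : IsLatticePt z) :
    ∃ n : ℤ, IsLeast ((dotp · z) '' P) n := by
  obtain ⟨S, hS, rfl⟩ := hP
  obtain ⟨s, hs, hmin⟩ := S.exists_min_image (dotp · z) (convexHull_nonempty_iff.1 hne)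
  obtain ⟨n, hn⟩ := (hS s hs).exists_int_dotp_eq hz
  refine ⟨n, ⟨s, subset_convexHull ℝ _ hs, hn⟩, ?_⟩
  rintro _ ⟨x, hx, rfl⟩
  exact hn ▸ convexHull_min hmin (convex_setOf_le_dotp _ z) hx

theorem exists_dotp_neg_of_mem_extremePoints_dualSet [Nonempty (Fin d)]
    {A : Set (Fin d → ℝ)} (hA : (0 : Fin d → ℝ) ∈ interior (dualSet A)) {e : Fin d → ℝ}
    (he : e ∈ (dualSet A).extremePoints ℝ) : ∃ x ∈ A, dotp x e < 0 := by
  by_contra! hnonneg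
  have h0 : (0 : Fin d → ℝ) ∈ dualSet A := interior_subset hA
  have h2e : (2 : ℝ) • e ∈ dualSet A := fun y hy => by
    have hye : 0 ≤ y ⬝ᵥ e := hnonneg y hy
    rw [dotp_eq_dotProduct, dotProduct_smul, smul_eq_mul]
    linarith
  have hseg : e ∈ openSegment ℝ 0 ((2 : ℝ) • e) :=
    ⟨1 / 2, 1 / 2, by norm_num, by norm_num, by norm_num, by module⟩
  obtain rfl : (0 : Fin d → ℝ) = e := he.2 h0 h2e hseg
  exact Set.disjoint_iff.1 (disjoint_interior_extremePoints _) ⟨hA, he⟩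

end Dual

theorem IsLeast.fintypeSum {ι β : Type*} [Fintype ι] [AddCommMonoid β] [PartialOrder β]
    [IsOrderedAddMonoid β] {s : ι → Set β} {a : ι → β} (h : ∀ i, IsLeast (s i) (a i)) :
    IsLeast (∑ i, s i) (∑ i, a i) := by
  refine ⟨Set.finsetSum_mem_finsetSum _ _ _ fun i _ => (h i).1, ?_⟩
  intro _ hx
  obtain ⟨x, hxs, rfl⟩ := (Set.mem_fintype_sum s _).1 hx
  exact Finset.sum_le_sum fun i _ => (h i).2 (hxs i)

theorem exists_eq_neg_one_and_eq_zero_of_sum_eq_neg_one {ι : Type*} [Fintype ι] {m : ι → ℤ}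
    (hm : ∀ i, m i ≤ 0) (hsum : ∑ i, m i = -1) : ∃ i, m i = -1 ∧ ∀ j ≠ i, m j = 0 := by
  classical
  obtain ⟨i, -, hi⟩ := Finset.exists_ne_zero_of_sum_ne_zero (by omega : ∑ i, m i ≠ 0)
  have hsplit := Finset.add_sum_erase Finset.univ m (Finset.mem_univ i)
  have hrest : ∑ j ∈ Finset.univ.erase i, m j ≤ 0 := Finset.sum_nonpos fun j _ => hm j
  have hmi := hm i
  have hrest0 : ∑ j ∈ Finset.univ.erase i, m j = 0 := by omega
  refine ⟨i, by omega, fun j hj => ?_⟩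
  exact (Finset.sum_eq_zero_iff_of_nonpos fun j _ => hm j).1 hrest0 j (by simpa using hj)

/-- for every vertex `e` of `Δ*` exactly one part of the Minkowski
decomposition has minimum `-1` against `e`, and all other parts have minimum `0`. -/
theorem exists_unique_part_with_min_neg_one {d r : ℕ} (hd : 1 ≤ d)
    (Δ : Set (Fin d → ℝ)) (hΔ : IsReflexivePolytope Δ)
    (D : Fin r → Set (Fin d → ℝ)) (hlat : ∀ i, IsLatticePolytope (D i))
    (h0 : ∀ i, (0 : Fin d → ℝ) ∈ D i) (hsum : Δ = ∑ i, D i)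
    (e : Fin d → ℝ) (he : e ∈ Set.extremePoints ℝ (dualSet Δ)) :
    ∃ i, minDot (D i) e = -1 ∧ ∀ j, j ≠ i → minDot (D j) e = 0 := by
  have : Nonempty (Fin d) := ⟨⟨0, hd⟩⟩
  have he_lat : IsLatticePt e := hΔ.2.2.isLatticePt_of_mem_extremePoints he
  choose m hm using fun i => (hlat i).exists_isLeast_image_dotp ⟨0, h0 i⟩ he_lat
  have hm_nonpos (i : Fin r) : m i ≤ 0 := by
    exact_mod_cast (hm i).2 ⟨0, h0 i, zero_dotProduct e⟩
  have hΔ_least : IsLeast ((dotp · e) '' Δ) (∑ i, m i : ℤ) := by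
    rw [hsum, image_dotp_fintypeSum, Int.cast_sum]
    exact IsLeast.fintypeSum hm
  have hsum_ge : -1 ≤ ∑ i, m i := by
    obtain ⟨x, hx, hxe : dotp x e = _⟩ := hΔ_least.1
    exact_mod_cast hxe ▸ he.1 x hx
  have hsum_lt : ∑ i, m i < 0 := by
    obtain ⟨x, hx, hxe⟩ :=
      exists_dotp_neg_of_mem_extremePoints_dualSet hΔ.1.zero_mem_interior_dualSet he
    exact_mod_cast (hΔ_least.2 ⟨x, hx, rfl⟩).trans_lt hxe
  obtain ⟨i, hi, hrest⟩ := exists_eq_neg_one_and_eq_zero_of_sum_eq_neg_one hm_nonpos (by omega)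
  refine ⟨i, ?_, fun j hj => ?_⟩
  · simp [minDot, (hm i).csInf_eq, hi]
  · simp [minDot, (hm j).csInf_eq, hrest j hj]
end

section
/- Let d ≥ 1, let Δ ⊆ ℝ^d be a reflexive polytope, and let Δ = Δ_1 + … + Δ_r be a Minkowski sum decomposition where each Δ_i is a lattice polytope containing 0. For each i let E_i be the set of extreme points e of Δ* with min_{x ∈ Δ_i} ⟨x, e⟩ = -1, and let ∇_i be the convex hull of E_i ∪ {0}. Then for all indices i and j and all x ∈ Δ_i, y ∈ ∇_j: ⟨x, y⟩ ≥ -1 if i = j, and ⟨x, y⟩ ≥ 0 if i ≠ j. -/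
open Pointwise

/-!
For `e ∈ E_j`, every `x ∈ Δ_i` satisfies `⟨x, e⟩ ≥ -1`, since `Δ_i ⊆ Δ` (the other summands
contain `0`). If `i ≠ j` and `⟨x, e⟩ < 0`, pick `z ∈ Δ_j` with `⟨z, e⟩` close enough to
`min_{Δ_j} ⟨·, e⟩ = -1`: then `x + z ∈ Δ` and `⟨x + z, e⟩ < -1`, contradicting `e ∈ Δ*`. Both
bounds are nonpositive, so they hold on `0` as well and pass to the convex hull `∇_j`.
-/

-- `dotp` is definitionally `dotProduct`, so its algebra is inherited from `Matrix`.
theorem dotp_add_left_s8 {d : ℕ} (x y z : Fin d → ℝ) : dotp (x + y) z = dotp x z + dotp y z :=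
  add_dotProduct x y z

theorem dotp_zero_right {d : ℕ} (x : Fin d → ℝ) : dotp x 0 = 0 :=
  dotProduct_zero x

theorem isLinearMap_dotp {d : ℕ} (x : Fin d → ℝ) : IsLinearMap ℝ (dotp x) :=
  ⟨dotProduct_add x, fun c y => dotProduct_smul c x y⟩

theorem le_dotp_of_mem_convexHull_union_zero {d : ℕ} {S : Set (Fin d → ℝ)}
    {x y : Fin d → ℝ} {c : ℝ} (hc : c ≤ 0) (hS : ∀ e ∈ S, c ≤ dotp x e)
    (hy : y ∈ convexHull ℝ (S ∪ {0})) : c ≤ dotp x y := by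
  refine convexHull_min ?_ (convex_halfSpace_ge (isLinearMap_dotp x) c) hy
  rintro e (he | rfl)
  · exact hS e he
  · show c ≤ dotp x 0
    rwa [dotp_zero_right]

theorem dotp_nonneg_of_minDot_eq_neg_one {d : ℕ} {A B : Set (Fin d → ℝ)} {x e : Fin d → ℝ}
    (he : e ∈ dualSet A) (hB : B.Nonempty) (hmin : minDot B e = -1)
    (hadd : ∀ z ∈ B, x + z ∈ A) : 0 ≤ dotp x e := by
  by_contra! hneg
  obtain ⟨_, ⟨z, hz, rfl⟩, hlt⟩ :=
    exists_lt_of_csInf_lt (hB.image _) (show minDot B e < -1 - dotp x e by linarith)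
  have := he _ (hadd z hz)
  rw [dotp_add_left_s8] at this
  linarith

namespace Set

variable {ι M : Type*} [Fintype ι] [DecidableEq ι] [AddCommMonoid M] {A : ι → Set M}

theorem mem_fintype_sum_of_mem (h0 : ∀ k, 0 ∈ A k) {i : ι} {x : M} (hx : x ∈ A i) :
    x ∈ ∑ k, A k := by
  have := finsetSum_mem_finsetSum Finset.univ A (Pi.single i x) fun k _ => by
    rcases eq_or_ne k i with rfl | hk
    · simpa using hx
    · simpa [hk] using h0 k
  simpa using this

theorem add_mem_fintype_sum_of_ne (h0 : ∀ k, 0 ∈ A k) {i j : ι} (hij : i ≠ j) {x z : M}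
    (hx : x ∈ A i) (hz : z ∈ A j) : x + z ∈ ∑ k, A k := by
  have := finsetSum_mem_finsetSum Finset.univ A (Pi.single i x + Pi.single j z) fun k _ => by
    rcases eq_or_ne k i with rfl | hki
    · simpa [hij] using hx
    rcases eq_or_ne k j with rfl | hkj
    · simpa [hki] using hz
    · simpa [hki, hkj] using h0 k
  simpa [Finset.sum_add_distrib] using this

end Set

theorem nef_pairing_inequalities_general {d r : ℕ}
    (Δ : Set (Fin d → ℝ))
    (D : Fin r → Set (Fin d → ℝ))
    (h0 : ∀ i, (0 : Fin d → ℝ) ∈ D i) (hsum : Δ = ∑ i, D i)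
    (E : Fin r → Set (Fin d → ℝ))
    (hE : ∀ i, E i = {e ∈ Set.extremePoints ℝ (dualSet Δ) | minDot (D i) e = -1})
    (N : Fin r → Set (Fin d → ℝ))
    (hN : ∀ i, N i = convexHull ℝ (E i ∪ {0})) :
    ∀ i j, ∀ x ∈ D i, ∀ y ∈ N j,
      (i = j → -1 ≤ dotp x y) ∧ (i ≠ j → 0 ≤ dotp x y) := by
  intro i j x hx y hy
  rw [hN, hE] at hy
  subst hsum
  refine ⟨fun hij => ?_, fun hij => ?_⟩
  · refine le_dotp_of_mem_convexHull_union_zero (by norm_num) (fun e he => ?_) hy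
    exact he.1.1 x (Set.mem_fintype_sum_of_mem h0 hx)
  · refine le_dotp_of_mem_convexHull_union_zero le_rfl (fun e he => ?_) hy
    exact dotp_nonneg_of_minDot_eq_neg_one he.1.1 ⟨0, h0 j⟩ he.2
      fun z hz => Set.add_mem_fintype_sum_of_ne h0 hij hx hz

/-- the pairing inequalities `⟨Δ_i, ∇_j⟩ ≥ -δ_{ij}` of Remark 3.3. -/
theorem nef_pairing_inequalities {d r : ℕ} (hd : 1 ≤ d)
    (Δ : Set (Fin d → ℝ)) (hΔ : IsReflexivePolytope Δ)
    (D : Fin r → Set (Fin d → ℝ)) (hlat : ∀ i, IsLatticePolytope (D i))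
    (h0 : ∀ i, (0 : Fin d → ℝ) ∈ D i) (hsum : Δ = ∑ i, D i)
    (E : Fin r → Set (Fin d → ℝ))
    (hE : ∀ i, E i = {e ∈ Set.extremePoints ℝ (dualSet Δ) | minDot (D i) e = -1})
    (N : Fin r → Set (Fin d → ℝ))
    (hN : ∀ i, N i = convexHull ℝ (E i ∪ {0})) :
    ∀ i j, ∀ x ∈ D i, ∀ y ∈ N j,
      (i = j → -1 ≤ dotp x y) ∧ (i ≠ j → 0 ≤ dotp x y) :=
  nef_pairing_inequalities_general Δ D h0 hsum E hE N hN
end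

section
/- Let P be a finite Eulerian poset of rank d, let B be a B-family for P, and let B* be a B-family for the dual poset P* (the same set with the order reversed). Then B(P; u, v) = (-u)^d · B*(P*; u^{-1}, v) as an identity in the Laurent polynomial ring ℤ[u^{±1}, v^{±1}], where B(P; u, v) denotes the polynomial assigned to the full interval [0̂, 1̂]. -/
open scoped Classical

/-- The ring `ℤ[u^{±1}, v^{±1}]` of Laurent polynomials in two variables,
realized as Laurent polynomials over Laurent polynomials. -/
abbrev LaurentTwo := LaurentPolynomial (LaurentPolynomial ℤ)

/-- The variable `u`. -/
noncomputable def Uvar : LaurentTwo := LaurentPolynomial.C (LaurentPolynomial.T 1)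

/-- The variable `v`. -/
noncomputable def Vvar : LaurentTwo := LaurentPolynomial.T 1

/-- The inverse variable `u⁻¹`. -/
noncomputable def UvarInv : LaurentTwo := LaurentPolynomial.C (LaurentPolynomial.T (-1))

/-- The inverse variable `v⁻¹`. -/
noncomputable def VvarInv : LaurentTwo := LaurentPolynomial.T (-1)

/-- Substitution of the values `p` for `u` (variable `0`) and `q` for `v`
(variable `1`) in a polynomial of `ℤ[u,v]`, landing in `ℤ[u^{±1}, v^{±1}]`. -/
noncomputable def substUV (p q : LaurentTwo) (B : MvPolynomial (Fin 2) ℤ) : LaurentTwo :=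
  MvPolynomial.aeval (fun i : Fin 2 => if i = 0 then p else q) B

/-- A `B`-family on a finite set `P` with order relation `le` and rank function `rk`:
an assignment of a polynomial `B x y ∈ ℤ[u,v]` (where `u` is the variable `0` and `v`
is the variable `1`) to every interval `[x,y]` such that
(1) `B x y = 1` on rank-zero intervals,
(2) the `v`-degree of `B x y` is strictly less than `(rk y - rk x)/2` on intervals of
positive rank, and
(3) for every interval `[x,y]` the identity
`Σ_{x ≤ z ≤ y} B([x,z]; u⁻¹, v⁻¹) (uv)^{ρ(z)-ρ(x)} (v-u)^{ρ(y)-ρ(z)}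
  = Σ_{x ≤ z ≤ y} B([z,y]; u, v) (uv-1)^{ρ(z)-ρ(x)}`
holds in `ℤ[u^{±1}, v^{±1}]`. -/
def IsBFamily {P : Type*} [Fintype P] (le : P → P → Prop) (rk : P → ℕ)
    (B : P → P → MvPolynomial (Fin 2) ℤ) : Prop :=
  (∀ x y : P, le x y → rk y = rk x → B x y = 1) ∧
  (∀ x y : P, le x y → rk x < rk y →
      2 * (B x y).degreeOf 1 < rk y - rk x) ∧
  (∀ x y : P, le x y →
      (∑ z : P, if le x z ∧ le z y then
          substUV UvarInv VvarInv (B x z) * (Uvar * Vvar) ^ (rk z - rk x)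
            * (Vvar - Uvar) ^ (rk y - rk z)
        else 0)
      = ∑ z : P, if le x z ∧ le z y then
          substUV Uvar Vvar (B z y) * (Uvar * Vvar - 1) ^ (rk z - rk x)
        else 0)

/-!
Both `B` and `(x, y) ↦ (-u)^(ρ y - ρ x) · Bs([y, x]; u⁻¹, v)` satisfy the defining conditions of
a `B`-family of `P`, read in `ℤ[u^{±1}, v^{±1}]`: for the second one, substitute `v ↦ v⁻¹` in the
recursion of `Bs` and multiply by `(-v)^(ρ y - ρ x)`. These conditions determine the family. By
induction on the rank `n` of `[x, y]`, the recursion shows that the difference `D` of two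
solutions on `[x, y]` satisfies `D(u⁻¹, v⁻¹) (uv)^n = D`, which maps the coefficient of `v^e` to
that of `v^(n-e)`; as `D` has `v`-degree `< n/2`, `D = 0`.
-/

open LaurentPolynomial

/-- The involution `u ↦ u⁻¹, v ↦ v⁻¹`: `invert` in the outer variable `v`, then in the
coefficients. The outer `invert` alone is `v ↦ v⁻¹`. -/
noncomputable def invertUV : LaurentTwo →+* LaurentTwo :=
  (AddMonoidAlgebra.mapRingHom ℤ (invert (R := ℤ)).toRingHom).comp
    (invert (R := ℤ[T;T⁻¹])).toRingHom

lemma invertUV_apply (f : LaurentTwo) :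
    invertUV f = AddMonoidAlgebra.mapRingHom ℤ (invert (R := ℤ)).toRingHom (invert f) :=
  rfl

lemma coeff_invertUV (f : LaurentTwo) (e : ℤ) :
    (invertUV f).coeff e = invert (f.coeff (-e)) := by
  simp [invertUV]

lemma invertUV_C (r : ℤ[T;T⁻¹]) : invertUV (C r) = C (invert r) := by
  rw [invertUV_apply, invert_C, ← single_eq_C, ← single_eq_C, AddMonoidAlgebra.mapRingHom_single]
  rfl

lemma invertUV_T (n : ℤ) : invertUV (T n) = T (-n) := by
  rw [invertUV_apply, invert_T, T, AddMonoidAlgebra.mapRingHom_single]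
  simp

lemma invertUV_Uvar : invertUV Uvar = UvarInv := by
  rw [Uvar, invertUV_C, invert_T]; rfl

lemma invertUV_UvarInv : invertUV UvarInv = Uvar := by
  rw [UvarInv, invertUV_C, invert_T, neg_neg]; rfl

lemma invertUV_Vvar : invertUV Vvar = VvarInv := invertUV_T 1

lemma invert_Uvar : invert Uvar = Uvar := invert_C _
lemma invert_UvarInv : invert UvarInv = UvarInv := invert_C _
lemma invert_Vvar : invert Vvar = VvarInv := invert_T _
lemma invert_VvarInv : invert VvarInv = Vvar := invert_T _

lemma Uvar_mul_UvarInv : Uvar * UvarInv = 1 := by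
  rw [Uvar, UvarInv, ← map_mul, ← T_add, add_neg_cancel, T_zero, map_one]

lemma Vvar_mul_VvarInv : Vvar * VvarInv = 1 := by
  rw [Vvar, VvarInv, ← T_add, add_neg_cancel, T_zero]

lemma Uvar_mul_Vvar_pow (n : ℕ) :
    (Uvar * Vvar) ^ n = AddMonoidAlgebra.single (n : ℤ) (T n) := by
  rw [single_eq_C_mul_T, mul_pow, Uvar, Vvar, ← map_pow, T_pow, T_pow, mul_one]

lemma map_substUV {F : Type*} [FunLike F LaurentTwo LaurentTwo]
    [RingHomClass F LaurentTwo LaurentTwo]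
    (φ : F) (p q : LaurentTwo) (B : MvPolynomial (Fin 2) ℤ) :
    φ (substUV p q B) = substUV (φ p) (φ q) B := by
  let ψ : LaurentTwo →+* LaurentTwo := φ
  change ψ (substUV p q B) = substUV (ψ p) (ψ q) B
  simp only [substUV, MvPolynomial.map_aeval, apply_ite ψ]
  rw [RingHom.ext_int (ψ.comp _) (algebraMap ℤ _)]
  rfl

lemma substUV_one (p q : LaurentTwo) : substUV p q 1 = 1 := map_one _

lemma substUV_monomial (p q : LaurentTwo) (m : Fin 2 →₀ ℕ) (c : ℤ) :
    substUV p q (MvPolynomial.monomial m c) = c • (p ^ m 0 * q ^ m 1) := by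
  simp [substUV, MvPolynomial.aeval_monomial, Finsupp.prod_fintype, Fin.prod_univ_two,
    Algebra.smul_def]

lemma coeff_substUV_C_Vvar_eq_zero (p : ℤ[T;T⁻¹]) (B : MvPolynomial (Fin 2) ℤ) {e : ℤ}
    (he : (B.degreeOf 1 : ℤ) < e) : (substUV (C p) Vvar B).coeff e = 0 := by
  rw [B.as_sum, substUV, map_sum, AddMonoidAlgebra.coeff_sum, Finsupp.finsetSum_apply]
  refine Finset.sum_eq_zero fun m hm => ?_
  have hm1 : (m 1 : ℤ) ≠ e := by
    have := MvPolynomial.monomial_le_degreeOf 1 hm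
    omega
  rw [← substUV, substUV_monomial, Vvar, T_pow, mul_one, ← map_pow, ← single_eq_C_mul_T,
    AddMonoidAlgebra.smul_single, AddMonoidAlgebra.coeff_single, Finsupp.single_eq_of_ne hm1.symm]

lemma coeff_neg_Uvar_pow_mul_substUV_eq_zero (k : ℕ) (B : MvPolynomial (Fin 2) ℤ) {e : ℤ}
    (he : (B.degreeOf 1 : ℤ) < e) : ((-Uvar) ^ k * substUV UvarInv Vvar B).coeff e = 0 := by
  rw [Uvar, ← map_neg, ← map_pow, ← single_eq_C, AddMonoidAlgebra.coeff_single_zero_mul,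
    UvarInv, coeff_substUV_C_Vvar_eq_zero _ _ he, mul_zero]

lemma eq_zero_of_invertUV_mul_eq {D : LaurentTwo} {n : ℕ}
    (hD : invertUV D * (Uvar * Vvar) ^ n = D)
    (hdeg : ∀ e : ℤ, (n : ℤ) ≤ 2 * e → D.coeff e = 0) : D = 0 := by
  have hcoeff : ∀ e, D.coeff e = T n * invert (D.coeff (n - e)) := fun e => by
    conv_lhs => rw [← hD]
    rw [mul_comm, Uvar_mul_Vvar_pow, AddMonoidAlgebra.coeff_single_mul_apply, coeff_invertUV,
      neg_add, neg_neg, ← sub_eq_add_neg]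
  refine LaurentPolynomial.ext fun e => by_contra fun hne => ?_
  have he : 2 * e < n := by
    by_contra! h
    exact hne (hdeg e h)
  have hne' : D.coeff (n - e) ≠ 0 := fun h => hne (by rw [hcoeff, h, map_zero, mul_zero]; rfl)
  exact hne' (hdeg _ (by omega))

section InverseVariables

variable {R : Type*} [CommRing R] {u u' v v' : R}

lemma neg_pow_mul_mul_pow_mul_sub_pow (hu : u * u' = 1) (hv : v * v' = 1) (S : R) (a b : ℕ) :
    (-u') ^ a * S * (u * v) ^ a * (v - u) ^ b = S * (u * v' - 1) ^ b * (-v) ^ (a + b) := by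
  have h₁ : -u' * (u * v) = -v := by linear_combination -v * hu
  have h₂ : (u * v' - 1) * -v = v - u := by linear_combination -u * hv
  calc (-u') ^ a * S * (u * v) ^ a * (v - u) ^ b
      = S * (-u' * (u * v)) ^ a * (v - u) ^ b := by rw [mul_pow]; ring
    _ = S * (-v) ^ a * ((u * v' - 1) * -v) ^ b := by rw [h₁, h₂]
    _ = S * (u * v' - 1) ^ b * (-v) ^ (a + b) := by rw [mul_pow, pow_add]; ring

lemma neg_pow_mul_mul_sub_one_pow (hv : v * v' = 1) (S : R) (a b : ℕ) :
    (-u) ^ b * S * (u * v - 1) ^ a = S * (u * v') ^ b * (v' - u) ^ a * (-v) ^ (a + b) := by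
  have h₁ : u * v' * -v = -u := by linear_combination -u * hv
  have h₂ : (v' - u) * -v = u * v - 1 := by linear_combination -hv
  calc (-u) ^ b * S * (u * v - 1) ^ a = S * (u * v' * -v) ^ b * ((v' - u) * -v) ^ a := by
        rw [h₁, h₂]; ring
    _ = S * (u * v') ^ b * (v' - u) ^ a * (-v) ^ (a + b) := by
        rw [mul_pow (u * v'), mul_pow (v' - u), pow_add]; ring

end InverseVariables

section Poset

variable {P : Type*} [Fintype P] [PartialOrder P]

lemma sum_ite_Icc_sub_sum_ite_Icc {R : Type*} [AddCommGroup R] {x y w : P} (hw : x ≤ w ∧ w ≤ y)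
    {f g : P → R} (h : ∀ z, x ≤ z → z ≤ y → z ≠ w → f z = g z) :
    ((∑ z, if x ≤ z ∧ z ≤ y then f z else 0) - ∑ z, if x ≤ z ∧ z ≤ y then g z else 0) =
      f w - g w := by
  rw [← Finset.sum_sub_distrib, Finset.sum_eq_single w]
  · rw [if_pos hw, if_pos hw]
  · intro z _ hzw
    split_ifs with hz
    · rw [h z hz.1 hz.2 hzw, sub_self]
    · exact sub_self 0
  · exact fun h => absurd (Finset.mem_univ w) h

/-- `IsBFamily`, read in `ℤ[u^{±1}, v^{±1}]`: `(F x y).coeff e` is the coefficient of `v ^ e`. -/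
structure IsLaurentBFamily (rk : P → ℕ) (F : P → P → LaurentTwo) : Prop where
  diag : ∀ x, F x x = 1
  coeff_eq_zero : ∀ x y, x < y → ∀ e : ℤ, (rk y : ℤ) - rk x ≤ 2 * e → (F x y).coeff e = 0
  recursion : ∀ x y, x ≤ y →
    (∑ z, if x ≤ z ∧ z ≤ y then
        invertUV (F x z) * (Uvar * Vvar) ^ (rk z - rk x) * (Vvar - Uvar) ^ (rk y - rk z)
      else 0) =
    ∑ z, if x ≤ z ∧ z ≤ y then F z y * (Uvar * Vvar - 1) ^ (rk z - rk x) else 0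

theorem IsLaurentBFamily.eq {rk : P → ℕ} (hrk : StrictMono rk) {F G : P → P → LaurentTwo}
    (hF : IsLaurentBFamily rk F) (hG : IsLaurentBFamily rk G) {x y : P} (hxy : x ≤ y) :
    F x y = G x y := by
  induction hn : rk y - rk x using Nat.strong_induction_on generalizing x y with
  | _ n ih =>
  obtain rfl | hlt := hxy.eq_or_lt
  · rw [hF.diag, hG.diag]
  have hD : invertUV (F x y - G x y) * (Uvar * Vvar) ^ n = F x y - G x y := by
    have hL := sum_ite_Icc_sub_sum_ite_Icc (w := y) ⟨hxy, le_rfl⟩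
      (f := fun z => invertUV (F x z) * (Uvar * Vvar) ^ (rk z - rk x) *
        (Vvar - Uvar) ^ (rk y - rk z))
      (g := fun z => invertUV (G x z) * (Uvar * Vvar) ^ (rk z - rk x) *
        (Vvar - Uvar) ^ (rk y - rk z))
      fun z hxz hzy hzy' => by
        rw [ih (rk z - rk x) (by have := hrk (hzy.lt_of_ne hzy'); have := hrk.monotone hxz; omega)
          hxz rfl]
    have hR := sum_ite_Icc_sub_sum_ite_Icc (w := x) ⟨le_rfl, hxy⟩
      (f := fun z => F z y * (Uvar * Vvar - 1) ^ (rk z - rk x))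
      (g := fun z => G z y * (Uvar * Vvar - 1) ^ (rk z - rk x))
      fun z hxz hzy hxz' => by
        rw [ih (rk y - rk z) (by have := hrk (hxz.lt_of_ne' hxz'); have := hrk.monotone hzy; omega)
          hzy rfl]
    rw [hF.recursion x y hxy, hG.recursion x y hxy, hR] at hL
    simpa [hn, ← sub_mul] using hL.symm
  refine sub_eq_zero.mp (eq_zero_of_invertUV_mul_eq hD fun e he => ?_)
  rw [AddMonoidAlgebra.coeff_sub, Finsupp.sub_apply, hF.coeff_eq_zero x y hlt e (by omega),
    hG.coeff_eq_zero x y hlt e (by omega), sub_zero]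

lemma IsBFamily.isLaurentBFamily {rk : P → ℕ} {B : P → P → MvPolynomial (Fin 2) ℤ}
    (hrk : StrictMono rk) (hB : IsBFamily (· ≤ ·) rk B) :
    IsLaurentBFamily rk (fun x y => substUV Uvar Vvar (B x y)) where
  diag x := by rw [hB.1 x x le_rfl rfl, substUV_one]
  coeff_eq_zero x y hxy e he := by
    have := hB.2.1 x y hxy.le (hrk hxy)
    exact coeff_substUV_C_Vvar_eq_zero _ _ (by omega)
  recursion x y hxy := by
    simpa only [map_substUV, invertUV_Uvar, invertUV_Vvar] using hB.2.2 x y hxy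

lemma IsBFamily.isLaurentBFamily_dual {rk : P → ℕ} {d : ℕ}
    {Bs : P → P → MvPolynomial (Fin 2) ℤ} (hrk : StrictMono rk) (hd : ∀ x, rk x ≤ d)
    (hBs : IsBFamily (fun x y => y ≤ x) (fun x => d - rk x) Bs) :
    IsLaurentBFamily rk (fun x y => (-Uvar) ^ (rk y - rk x) * substUV UvarInv Vvar (Bs y x)) where
  diag x := by rw [hBs.1 x x le_rfl rfl, substUV_one, Nat.sub_self, pow_zero, one_mul]
  coeff_eq_zero x y hxy e he := by
    have hdeg : 2 * (Bs y x).degreeOf 1 < (d - rk x) - (d - rk y) :=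
      hBs.2.1 y x hxy.le (show d - rk y < d - rk x by have := hrk hxy; have := hd y; omega)
    exact coeff_neg_Uvar_pow_mul_substUV_eq_zero _ _ (by have := hd y; omega)
  recursion x y hxy := by
    have hdual := congrArg (fun s => invert s * (-Vvar) ^ (rk y - rk x)) (hBs.2.2 y x hxy)
    simp only [map_sum, Finset.sum_mul] at hdual
    refine Eq.trans (Finset.sum_congr rfl fun z _ => ?_)
      (hdual.symm.trans (Finset.sum_congr rfl fun z _ => ?_))
    · by_cases hz : x ≤ z ∧ z ≤ y
      · rw [if_pos hz, if_pos hz.symm, tsub_tsub_tsub_cancel_left (hd y),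
          ← Nat.sub_add_sub_cancel (hrk.monotone hz.2) (hrk.monotone hz.1), add_comm]
        simp only [map_mul, map_pow, map_neg, map_sub, map_one, map_substUV, invertUV_Uvar,
          invertUV_UvarInv, invertUV_Vvar, invert_Uvar, invert_Vvar]
        exact neg_pow_mul_mul_pow_mul_sub_pow Uvar_mul_UvarInv Vvar_mul_VvarInv _ _ _
      · rw [if_neg hz, if_neg (mt And.symm hz), map_zero, zero_mul]
    · by_cases hz : x ≤ z ∧ z ≤ y
      · rw [if_pos hz, if_pos hz.symm, tsub_tsub_tsub_cancel_left (hd y),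
          tsub_tsub_tsub_cancel_left (hd z),
          ← Nat.sub_add_sub_cancel (hrk.monotone hz.2) (hrk.monotone hz.1), add_comm]
        simp only [map_mul, map_pow, map_sub, map_substUV, invert_Uvar, invert_UvarInv,
          invert_Vvar, invert_VvarInv]
        exact (neg_pow_mul_mul_sub_one_pow Vvar_mul_VvarInv _ _ _).symm
      · rw [if_neg hz, if_neg (mt And.symm hz), map_zero, zero_mul]

end Poset

theorem bPolynomial_dual_general {P : Type*} [Fintype P] [PartialOrder P] [BoundedOrder P]
    [GradeBoundedOrder ℕ P] (d : ℕ) (hd : grade ℕ (⊤ : P) = d)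
    (B Bs : P → P → MvPolynomial (Fin 2) ℤ)
    (hB : IsBFamily (· ≤ ·) (grade ℕ) B)
    (hBs : IsBFamily (fun x y => y ≤ x) (fun x => d - grade ℕ x) Bs) :
    substUV Uvar Vvar (B ⊥ ⊤) = (-Uvar) ^ d * substUV UvarInv Vvar (Bs ⊤ ⊥) := by
  have hrk : StrictMono (grade ℕ : P → ℕ) := grade_strictMono
  have hle : ∀ x : P, grade ℕ x ≤ d := fun x => hd ▸ hrk.monotone le_top
  have h := (hB.isLaurentBFamily hrk).eq hrk (hBs.isLaurentBFamily_dual hrk hle)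
    (bot_le : (⊥ : P) ≤ ⊤)
  simpa [hd, grade_bot] using h

/-- Remark 5.3: for a finite Eulerian poset `P` of rank `d` with a
`B`-family `B`, and a `B`-family `Bs` for the dual poset (reversed order, rank
function `d - ρ`), one has `B(P; u, v) = (-u)^d Bs(P*; u⁻¹, v)` in `ℤ[u^{±1}, v^{±1}]`. -/
theorem bPolynomial_dual {P : Type*} [Fintype P] [PartialOrder P] [BoundedOrder P]
    [GradeBoundedOrder ℕ P] (d : ℕ) (hd : grade ℕ (⊤ : P) = d)
    (heuler : ∀ x y : P, x ≤ y → x ≠ y →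
      (Finset.univ.filter
        (fun z => x ≤ z ∧ z ≤ y ∧ Even (grade ℕ z - grade ℕ x))).card =
      (Finset.univ.filter
        (fun z => x ≤ z ∧ z ≤ y ∧ ¬ Even (grade ℕ z - grade ℕ x))).card)
    (B Bs : P → P → MvPolynomial (Fin 2) ℤ)
    (hB : IsBFamily (· ≤ ·) (grade ℕ) B)
    (hBs : IsBFamily (fun x y => y ≤ x) (fun x => d - grade ℕ x) Bs) :
    substUV Uvar Vvar (B ⊥ ⊤) = (-Uvar) ^ d * substUV UvarInv Vvar (Bs ⊤ ⊥) :=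
  bPolynomial_dual_general d hd B Bs hB hBs
end
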